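/- Let (r,v) : I → H² × dS² be a spacelike Legendre curve with spacelike hyperbolic Legendre curvature (ℓ,m), write ν = v, and let s₀ ∈ I. Suppose ℓ has an A_{k−1}-type singularity at s₀ for some k ≥ 0. Then for every j ≥ 1 there exist a neighborhood U of s₀ in I and smooth functions a₀,…,a_{j−1} : U → ℝ such that ⟨ν^{(j+1)}(s), ν(s)⟩ = Σ_{i=0}^{j−1} a_i(s)·m^{(i)}(s) for all s ∈ U; i.e., the germ at s₀ of ⟨ν^{(j+1)}, ν⟩ lies in the ideal of smooth function germs generated by the germs of m, m', …, m^{(j−1)}. -/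

import Mathlib

noncomputable section

/-- The Minkowski pseudo scalar product on `ℝ³₁`. -/
def mdot (u w : Fin 3 → ℝ) : ℝ := -(u 0 * w 0) + u 1 * w 1 + u 2 * w 2

/-- The Minkowski pseudo vector product on `ℝ³₁`. -/
def mcross (u w : Fin 3 → ℝ) : Fin 3 → ℝ :=
  ![-(u 1 * w 2) + u 2 * w 1, u 2 * w 0 - u 0 * w 2, -(u 1 * w 0) + u 0 * w 1]

/-- Hyperbolic 2-space. -/
def H2 : Set (Fin 3 → ℝ) := {u | mdot u u = -1}

/-- Upper branch of hyperbolic 2-space. -/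
def H2plus : Set (Fin 3 → ℝ) := {u | mdot u u = -1 ∧ 0 < u 0}

/-- de Sitter 2-space. -/
def dS2 : Set (Fin 3 → ℝ) := {u | mdot u u = 1}

/-- A spacelike Legendre curve `(r, v)` on the open interval `I`. -/
def IsSLegendre (I : Set ℝ) (r v : ℝ → Fin 3 → ℝ) : Prop :=
  ContDiffOn ℝ (⊤ : ℕ∞) r I ∧ ContDiffOn ℝ (⊤ : ℕ∞) v I ∧
  (∀ s ∈ I, r s ∈ H2) ∧ (∀ s ∈ I, v s ∈ dS2) ∧
  (∀ s ∈ I, mdot (r s) (v s) = 0) ∧ (∀ s ∈ I, mdot (deriv r s) (v s) = 0)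

/-- `μ = r ∧ v`. -/
def muc (r v : ℝ → Fin 3 → ℝ) : ℝ → Fin 3 → ℝ := fun s => mcross (r s) (v s)

/-- First Legendre curvature `ℓ = ⟨r', μ⟩`. -/
def ellc (r v : ℝ → Fin 3 → ℝ) : ℝ → ℝ := fun s => mdot (deriv r s) (muc r v s)

/-- Second Legendre curvature `m = ⟨v', μ⟩`. -/
def mc (r v : ℝ → Fin 3 → ℝ) : ℝ → ℝ := fun s => mdot (deriv v s) (muc r v s)

/-- Hyperbolic pedal curve relative to `Q` of a frontal with dual curve `v`. -/
def Ped (Q : Fin 3 → ℝ) (v : ℝ → Fin 3 → ℝ) (s : ℝ) : Fin 3 → ℝ :=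
  (Real.sqrt (1 + (mdot Q (v s)) ^ 2))⁻¹ • (Q - mdot Q (v s) • v s)

/-- Hyperbolic orthotomic curve relative to `Q` of a frontal with dual curve `v`. -/
def Ort (Q : Fin 3 → ℝ) (v : ℝ → Fin 3 → ℝ) (s : ℝ) : Fin 3 → ℝ :=
  Q - (2 * mdot Q (v s)) • v s

/-- The standard global chart of `H²₊`. -/
def qchart (x : Fin 3 → ℝ) : ℝ × ℝ := (x 1, x 2)

/-- `f` has an `A_{k-1}`-type singularity at `s₀` (for `k = 0` this means `f s₀ ≠ 0`,
i.e. an `A_{-1}`-type singularity). -/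
def AkSingPred (f : ℝ → ℝ) (k : ℕ) (s₀ : ℝ) : Prop :=
  (∀ i < k, iteratedDeriv i f s₀ = 0) ∧ iteratedDeriv k f s₀ ≠ 0

/-- `ψ` is a germ of a `C^n` diffeomorphism at `x`. -/
def IsLocalCnDiffeoAt (n : ℕ∞) {E F : Type*} [NormedAddCommGroup E] [NormedSpace ℝ E]
    [NormedAddCommGroup F] [NormedSpace ℝ F] (ψ : E → F) (x : E) : Prop :=
  ∃ (U : Set E) (V : Set F) (ψinv : F → E), IsOpen U ∧ x ∈ U ∧ IsOpen V ∧ ψ x ∈ V ∧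
    ContDiffOn ℝ n ψ U ∧ ContDiffOn ℝ n ψinv V ∧ Set.MapsTo ψ U V ∧ Set.MapsTo ψinv V U ∧
    (∀ y ∈ U, ψinv (ψ y) = y) ∧ (∀ z ∈ V, ψ (ψinv z) = z)

/-- The plane curve germ of `f` at `s₀` is `C^n` `𝒜`-equivalent to the germ of `g` at `t₀`. -/
def CnAEquiv (n : ℕ∞) (f : ℝ → ℝ × ℝ) (s₀ : ℝ) (g : ℝ → ℝ × ℝ) (t₀ : ℝ) : Prop :=
  ∃ (φ : ℝ → ℝ) (Ψ : ℝ × ℝ → ℝ × ℝ),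
    IsLocalCnDiffeoAt n φ s₀ ∧ φ s₀ = t₀ ∧
    IsLocalCnDiffeoAt n Ψ (f s₀) ∧ Ψ (f s₀) = g t₀ ∧
    ∀ᶠ s in nhds s₀, g (φ s) = Ψ (f s)

/-- The plane curve germ of `f` at `s₀` is `C^n` `ℒ`-equivalent to the germ of `g` at `s₀`. -/
def CnLEquiv (n : ℕ∞) (f : ℝ → ℝ × ℝ) (s₀ : ℝ) (g : ℝ → ℝ × ℝ) : Prop :=
  ∃ Ψ : ℝ × ℝ → ℝ × ℝ,
    IsLocalCnDiffeoAt n Ψ (f s₀) ∧ Ψ (f s₀) = g s₀ ∧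
    ∀ᶠ s in nhds s₀, g s = Ψ (f s)

end


section AuxLemmas

lemma aux_mdot_comm (u w : Fin 3 → ℝ) : mdot u w = mdot w u := by simp [mdot]; ring

lemma aux_mdot_smul_right (c : ℝ) (u w : Fin 3 → ℝ) : mdot u (c • w) = c * mdot u w := by
  simp [mdot]; ring

lemma aux_mcross_triple (a b c : Fin 3 → ℝ) :
    mcross a (mcross b c) = mdot a b • c - mdot a c • b := by
  funext i
  fin_cases i <;> simp [mcross, mdot] <;> ring

lemma aux_mdot_mcross_self (a b : Fin 3 → ℝ) :
    mdot (mcross a b) (mcross a b) = mdot a b ^ 2 - mdot a a * mdot b b := by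
  simp [mcross, mdot]; ring

lemma aux_key_expand (r v u : Fin 3 → ℝ) (hA : mdot r r = -1) (hB : mdot v v = 1)
    (hC : mdot r v = 0) (hD : mdot u r = 0) (hE : mdot u v = 0) :
    u = mdot u (mcross r v) • mcross r v := by
  have h1 : mcross u (mcross r v) = 0 := by
    rw [aux_mcross_triple, hD, hE]; simp
  have h2 := aux_mcross_triple (mcross r v) u (mcross r v)
  have h3 : mcross (mcross r v) (mcross u (mcross r v)) = 0 := by
    rw [h1]; funext i; fin_cases i <;> simp [mcross]
  rw [h3] at h2
  have h4 : mdot (mcross r v) (mcross r v) = 1 := by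
    rw [aux_mdot_mcross_self, hA, hB, hC]; ring
  rw [h4, aux_mdot_comm (mcross r v) u] at h2
  have h5 := sub_eq_zero.mp h2.symm
  rw [one_smul] at h5
  exact h5.symm

lemma aux_hasDerivAt_apply {f : ℝ → Fin 3 → ℝ} {f' : Fin 3 → ℝ} {s : ℝ}
    (hf : HasDerivAt f f' s) (i : Fin 3) : HasDerivAt (fun t => f t i) (f' i) s := by
  exact hasDerivAt_pi.1 hf i

lemma aux_hasDerivAt_mdot {f g : ℝ → Fin 3 → ℝ} {f' g' : Fin 3 → ℝ} {s : ℝ}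
    (hf : HasDerivAt f f' s) (hg : HasDerivAt g g' s) :
    HasDerivAt (fun t => mdot (f t) (g t)) (mdot f' (g s) + mdot (f s) g') s := by
  have H := (((aux_hasDerivAt_apply hf 0).mul (aux_hasDerivAt_apply hg 0)).neg.add
    ((aux_hasDerivAt_apply hf 1).mul (aux_hasDerivAt_apply hg 1))).add
    ((aux_hasDerivAt_apply hf 2).mul (aux_hasDerivAt_apply hg 2))
  have heq : (fun t => mdot (f t) (g t))
      = fun t => -(f t 0 * g t 0) + f t 1 * g t 1 + f t 2 * g t 2 := rfl
  rw [heq]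
  convert H using 1
  case e'_9 => simp only [mdot]; ring
  all_goals rfl

lemma aux_contDiffOn_apply {I : Set ℝ} {f : ℝ → Fin 3 → ℝ} (hf : ContDiffOn ℝ (⊤ : ℕ∞) f I)
    (i : Fin 3) : ContDiffOn ℝ (⊤ : ℕ∞) (fun s => f s i) I :=
  (ContinuousLinearMap.proj (R := ℝ) (φ := fun _ : Fin 3 => ℝ) i).contDiff.comp_contDiffOn hf

lemma aux_contDiffOn_mdot {I : Set ℝ} {f g : ℝ → Fin 3 → ℝ}
    (hf : ContDiffOn ℝ (⊤ : ℕ∞) f I) (hg : ContDiffOn ℝ (⊤ : ℕ∞) g I) :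
    ContDiffOn ℝ (⊤ : ℕ∞) (fun s => mdot (f s) (g s)) I := by
  have H := (((aux_contDiffOn_apply hf 0).mul (aux_contDiffOn_apply hg 0)).neg.add
    ((aux_contDiffOn_apply hf 1).mul (aux_contDiffOn_apply hg 1))).add
    ((aux_contDiffOn_apply hf 2).mul (aux_contDiffOn_apply hg 2))
  exact H.congr (fun s _ => by simp [mdot])

lemma aux_contDiffOn_mcross {I : Set ℝ} {f g : ℝ → Fin 3 → ℝ}
    (hf : ContDiffOn ℝ (⊤ : ℕ∞) f I) (hg : ContDiffOn ℝ (⊤ : ℕ∞) g I) :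
    ContDiffOn ℝ (⊤ : ℕ∞) (fun s => mcross (f s) (g s)) I := by
  apply contDiffOn_pi.2
  intro i
  fin_cases i
  · exact (((aux_contDiffOn_apply hf 1).mul (aux_contDiffOn_apply hg 2)).neg.add
      ((aux_contDiffOn_apply hf 2).mul (aux_contDiffOn_apply hg 1))).congr
      (fun s _ => by simp [mcross])
  · exact (((aux_contDiffOn_apply hf 2).mul (aux_contDiffOn_apply hg 0)).sub
      ((aux_contDiffOn_apply hf 0).mul (aux_contDiffOn_apply hg 2))).congr
      (fun s _ => by simp [mcross])
  · exact (((aux_contDiffOn_apply hf 1).mul (aux_contDiffOn_apply hg 0)).neg.add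
      ((aux_contDiffOn_apply hf 0).mul (aux_contDiffOn_apply hg 1))).congr
      (fun s _ => by simp [mcross])

lemma aux_contDiffOn_deriv_of_open {F : Type*} [NormedAddCommGroup F] [NormedSpace ℝ F]
    {I : Set ℝ} (hI : IsOpen I) {f : ℝ → F} (hf : ContDiffOn ℝ (⊤ : ℕ∞) f I) :
    ContDiffOn ℝ (⊤ : ℕ∞) (deriv f) I :=
  hf.deriv_of_isOpen hI (by simp)

lemma aux_contDiffOn_iteratedDeriv {F : Type*} [NormedAddCommGroup F] [NormedSpace ℝ F]
    {I : Set ℝ} (hI : IsOpen I) (n : ℕ) {f : ℝ → F} (hf : ContDiffOn ℝ (⊤ : ℕ∞) f I) :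
    ContDiffOn ℝ (⊤ : ℕ∞) (iteratedDeriv n f) I := by
  induction n generalizing f with
  | zero => simpa [iteratedDeriv_zero] using hf
  | succ n ih =>
    rw [iteratedDeriv_succ']
    exact ih (aux_contDiffOn_deriv_of_open hI hf)

variable {I : Set ℝ} {r v : ℝ → Fin 3 → ℝ}

lemma aux_hasDerivAt_of_contDiffOn {F : Type*} [NormedAddCommGroup F] [NormedSpace ℝ F]
    (hI : IsOpen I) {f : ℝ → F} (hf : ContDiffOn ℝ (⊤ : ℕ∞) f I) {s : ℝ} (hs : s ∈ I) :
    HasDerivAt f (deriv f s) s :=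
  (((hf.contDiffAt (hI.mem_nhds hs)).differentiableAt (by simp))).hasDerivAt

lemma aux_mdot_deriv_v_v (hI : IsOpen I) (h : IsSLegendre I r v) :
    ∀ s ∈ I, mdot (deriv v s) (v s) = 0 := by
  intro s hs
  have hdv := aux_hasDerivAt_of_contDiffOn hI h.2.1 hs
  have hD := aux_hasDerivAt_mdot hdv hdv
  have heq : (fun t => mdot (v t) (v t)) =ᶠ[nhds s] fun _ => (1 : ℝ) := by
    filter_upwards [hI.mem_nhds hs] with t ht using h.2.2.2.1 t ht
  have h0 : deriv (fun t => mdot (v t) (v t)) s = 0 := by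
    rw [heq.deriv_eq]; simp
  have h1 := hD.deriv
  rw [h0] at h1
  have h2 := aux_mdot_comm (v s) (deriv v s)
  linarith [h1, h2]

lemma aux_frenet_v (hI : IsOpen I) (h : IsSLegendre I r v) :
    ∀ s ∈ I, deriv v s = mc r v s • muc r v s := by
  intro s hs
  have hdv := aux_hasDerivAt_of_contDiffOn hI h.2.1 hs
  have hdr := aux_hasDerivAt_of_contDiffOn hI h.1 hs
  have hD := aux_hasDerivAt_mdot hdr hdv
  have heq : (fun t => mdot (r t) (v t)) =ᶠ[nhds s] fun _ => (0 : ℝ) := by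
    filter_upwards [hI.mem_nhds hs] with t ht using h.2.2.2.2.1 t ht
  have h0 : deriv (fun t => mdot (r t) (v t)) s = 0 := by
    rw [heq.deriv_eq]; simp
  have h1 := hD.deriv
  rw [h0] at h1
  have hrv' : mdot (r s) (deriv v s) = 0 := by
    have := h.2.2.2.2.2 s hs; linarith
  exact aux_key_expand (r s) (v s) (deriv v s) (h.2.2.1 s hs) (h.2.2.2.1 s hs)
    (h.2.2.2.2.1 s hs) ((aux_mdot_comm _ _).trans hrv') (aux_mdot_deriv_v_v hI h s hs)

theorem aux_main_ideal (hI : IsOpen I) (h : IsSLegendre I r v) (j : ℕ) :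
    ∃ a : ℕ → ℝ → ℝ, (∀ i < j, ContDiffOn ℝ (⊤ : ℕ∞) (a i) I) ∧
      ∀ s ∈ I, mdot (iteratedDeriv (j + 1) v s) (v s)
        = ∑ i ∈ Finset.range j, a i s * iteratedDeriv i (mc r v) s := by
  induction j with
  | zero =>
    exact ⟨fun _ _ => 0, by simp, fun s hs => by
      simpa [iteratedDeriv_one] using aux_mdot_deriv_v_v hI h s hs⟩
  | succ j ih =>
    obtain ⟨a, ha, hEq⟩ := ih
    have hmcSmooth : ContDiffOn ℝ (⊤ : ℕ∞) (mc r v) I :=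
      aux_contDiffOn_mdot (aux_contDiffOn_deriv_of_open hI h.2.1)
        (aux_contDiffOn_mcross h.1 h.2.1)
    set c : ℝ → ℝ := fun s => mdot (iteratedDeriv (j + 1) v s) (muc r v s) with hc
    have hcSmooth : ContDiffOn ℝ (⊤ : ℕ∞) c I :=
      aux_contDiffOn_mdot (aux_contDiffOn_iteratedDeriv hI (j + 1) h.2.1)
        (aux_contDiffOn_mcross h.1 h.2.1)
    refine ⟨fun i s => (if i < j then deriv (a i) s else 0)
      + (if i = 0 then -(c s) else a (i - 1) s), ?_, ?_⟩
    · intro i hij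
      apply ContDiffOn.add
      · by_cases hi : i < j
        · simpa [hi] using aux_contDiffOn_deriv_of_open hI (ha i hi)
        · simpa [hi] using contDiffOn_const (c := (0:ℝ))
      · by_cases hi : i = 0
        · simpa [hi] using hcSmooth.neg
        · simp only [hi, if_false]
          exact ha (i - 1) (by omega)
    · intro s hs
      have hv1 : HasDerivAt (iteratedDeriv (j + 1) v) (iteratedDeriv (j + 2) v s) s := by
        have := aux_hasDerivAt_of_contDiffOn hI
          (aux_contDiffOn_iteratedDeriv hI (j + 1) h.2.1) hs
        rwa [← iteratedDeriv_succ] at this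
      have hdv := aux_hasDerivAt_of_contDiffOn hI h.2.1 hs
      have hL := aux_hasDerivAt_mdot hv1 hdv
      have hR : HasDerivAt (fun t => ∑ i ∈ Finset.range j, a i t * iteratedDeriv i (mc r v) t)
          (∑ i ∈ Finset.range j,
            (deriv (a i) s * iteratedDeriv i (mc r v) s
              + a i s * iteratedDeriv (i + 1) (mc r v) s)) s := by
        apply HasDerivAt.fun_sum
        intro i hi
        exact (aux_hasDerivAt_of_contDiffOn hI (ha i (Finset.mem_range.1 hi)) hs).mul
          (by have := aux_hasDerivAt_of_contDiffOn hI
                (aux_contDiffOn_iteratedDeriv hI i hmcSmooth) hs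
              rwa [← iteratedDeriv_succ] at this)
      have heq : (fun t => mdot (iteratedDeriv (j + 1) v t) (v t))
          =ᶠ[nhds s] fun t => ∑ i ∈ Finset.range j, a i t * iteratedDeriv i (mc r v) t := by
        filter_upwards [hI.mem_nhds hs] with t ht using hEq t ht
      have hderiv : mdot (iteratedDeriv (j + 2) v s) (v s)
          + mdot (iteratedDeriv (j + 1) v s) (deriv v s)
          = ∑ i ∈ Finset.range j, (deriv (a i) s * iteratedDeriv i (mc r v) s
              + a i s * iteratedDeriv (i + 1) (mc r v) s) := by
        rw [← hL.deriv, heq.deriv_eq, hR.deriv]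
      have hfren : mdot (iteratedDeriv (j + 1) v s) (deriv v s) = mc r v s * c s := by
        rw [aux_frenet_v hI h s hs, aux_mdot_smul_right]
      have hgoal : mdot (iteratedDeriv (j + 1 + 1) v s) (v s)
          = ∑ i ∈ Finset.range j, (deriv (a i) s * iteratedDeriv i (mc r v) s
              + a i s * iteratedDeriv (i + 1) (mc r v) s) - mc r v s * c s := by
        have hjj : j + 1 + 1 = j + 2 := by ring
        rw [hjj]; linarith [hderiv, hfren]
      rw [hgoal]
      have e1 : ∑ i ∈ Finset.range (j + 1),
          ((if i < j then deriv (a i) s else 0) + (if i = 0 then -(c s) else a (i - 1) s))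
            * iteratedDeriv i (mc r v) s
          = ∑ i ∈ Finset.range (j + 1), ((if i < j then deriv (a i) s else 0)
              * iteratedDeriv i (mc r v) s)
            + ∑ i ∈ Finset.range (j + 1), ((if i = 0 then -(c s) else a (i - 1) s)
              * iteratedDeriv i (mc r v) s) := by
        rw [← Finset.sum_add_distrib]; congr 1; funext i; ring
      rw [e1]
      have e2 : ∑ i ∈ Finset.range (j + 1), ((if i < j then deriv (a i) s else 0)
            * iteratedDeriv i (mc r v) s)
          = ∑ i ∈ Finset.range j, deriv (a i) s * iteratedDeriv i (mc r v) s := by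
        rw [Finset.sum_range_succ]
        simp only [lt_irrefl, if_false, zero_mul, add_zero]
        exact Finset.sum_congr rfl fun i hi => by
          simp [Finset.mem_range.1 hi]
      have e3 : ∑ i ∈ Finset.range (j + 1), ((if i = 0 then -(c s) else a (i - 1) s)
            * iteratedDeriv i (mc r v) s)
          = (∑ i ∈ Finset.range j, a i s * iteratedDeriv (i + 1) (mc r v) s)
            + -(c s) * iteratedDeriv 0 (mc r v) s := by
        rw [Finset.sum_range_succ']
        simp
      rw [e2, e3, Finset.sum_add_distrib, iteratedDeriv_zero]
      ring

end AuxLemmas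

/-- part (1) of Lemma 4.4: the germ at `s₀` of `⟨ν^{(j+1)}, ν⟩` lies in the
ideal of smooth function germs generated by `m, m', …, m^{(j-1)}`. -/
theorem inner_dual_higher_deriv_dual_in_ideal
    (I : Set ℝ) (hI : IsOpen I) (r v : ℝ → Fin 3 → ℝ)
    (h : IsSLegendre I r v) (s₀ : ℝ) (hs₀ : s₀ ∈ I)
    (k : ℕ) (hk : AkSingPred (ellc r v) k s₀)
    (j : ℕ) (hj : 1 ≤ j) :
    ∃ (U : Set ℝ) (a : ℕ → ℝ → ℝ), IsOpen U ∧ s₀ ∈ U ∧ U ⊆ I ∧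
      (∀ i < j, ContDiffOn ℝ (⊤ : ℕ∞) (a i) U) ∧
      ∀ s ∈ U, mdot (iteratedDeriv (j + 1) v s) (v s)
        = ∑ i ∈ Finset.range j, a i s * iteratedDeriv i (mc r v) s := by
  obtain ⟨a, ha, hEq⟩ := aux_main_ideal hI h j
  exact ⟨I, a, hI, hs₀, subset_rfl, ha, hEq⟩
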